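/- Let $X$ be a nonnegative random variable with continuous density $p$ on $[0,\infty)$ and finite mean, and define the call price function $C(K) := \int_K^\infty (x - K)\, p(x)\, dx$ for $K \ge 0$. Then $C$ is twice differentiable on $(0,\infty)$ with $C''(K) = p(K)$. -/

import Mathlib

open MeasureTheory Set Topology

/-- Breeden–Litzenberger (zero interest rate): the call price
`C(K) = ∫_K^∞ (x - K) p(x) dx` is twice differentiable on `(0,∞)` with `C'' = p`. -/
theorem breeden_litzenberger
    (p : ℝ → ℝ) (hp_cont : ContinuousOn p (Ici (0:ℝ)))
    (hp_nonneg : ∀ x, 0 ≤ p x)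
    (hp_meas : Measurable p)
    (hp_int : ∫ x in Ici (0:ℝ), p x = 1)
    (hp_mean : IntegrableOn (fun x => x * p x) (Ici (0:ℝ))) :
    ∀ K ∈ Ioi (0:ℝ),
      DifferentiableAt ℝ (fun K => ∫ x in Ioi K, (x - K) * p x) K ∧
      HasDerivAt (deriv (fun K => ∫ x in Ioi K, (x - K) * p x)) (p K) K := by
  have hIntp : IntegrableOn p (Ici (0:ℝ)) := by
    by_contra h
    rw [MeasureTheory.integral_undef h] at hp_int
    norm_num at hp_int
  -- generic FTC fact
  have key : ∀ g : ℝ → ℝ, Measurable g → IntegrableOn g (Ici (0:ℝ)) →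
      ∀ K : ℝ, 0 < K → ContinuousAt g K →
      HasDerivAt (fun K' => ∫ x in Ioi K', g x) (-(g K)) K := by
    intro g hgm hgi K hK hgc
    have heq : ∀ᶠ K' in 𝓝 K,
        (∫ x in Ioi K', g x) = (∫ x in Ioi (0:ℝ), g x) - ∫ t in (0:ℝ)..K', g t := by
      filter_upwards [Ioi_mem_nhds hK] with K' hK'
      have hK' : (0:ℝ) < K' := hK'
      have h1 : IntegrableOn g (Ioc 0 K') := hgi.mono_set (fun x hx => le_of_lt hx.1)
      have h2 : IntegrableOn g (Ioi K') :=
        hgi.mono_set (fun x hx => le_trans hK'.le (le_of_lt hx))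
      have hsplit : (∫ x in Ioi (0:ℝ), g x)
          = (∫ x in Ioc 0 K', g x) + ∫ x in Ioi K', g x := by
        rw [← MeasureTheory.setIntegral_union (Ioc_disjoint_Ioi le_rfl) measurableSet_Ioi h1 h2,
          Ioc_union_Ioi_eq_Ioi hK'.le]
      rw [intervalIntegral.integral_of_le hK'.le]
      linarith [hsplit]
    have hii : IntervalIntegrable g volume 0 K := by
      apply MeasureTheory.IntegrableOn.intervalIntegrable
      refine hgi.mono_set ?_
      rw [uIcc_of_le hK.le]
      exact Icc_subset_Ici_self
    have hderiv : HasDerivAt (fun K' => (∫ x in Ioi (0:ℝ), g x) - ∫ t in (0:ℝ)..K', g t)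
        (-(g K)) K :=
      HasDerivAt.const_sub _
        (intervalIntegral.integral_hasDerivAt_right hii
          hgm.stronglyMeasurable.stronglyMeasurableAtFilter hgc)
    exact hderiv.congr_of_eventuallyEq heq
  intro K hK
  have hK : (0:ℝ) < K := hK
  set F : ℝ → ℝ := fun K => ∫ x in Ioi K, p x with hFdef
  set A : ℝ → ℝ := fun K => ∫ x in Ioi K, x * p x with hAdef
  have hxm : Measurable (fun x : ℝ => x * p x) := measurable_id.mul hp_meas
  have hFd : ∀ K' : ℝ, 0 < K' → HasDerivAt F (-(p K')) K' := fun K' hK' =>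
    key p hp_meas hIntp K' hK' (hp_cont.continuousAt (Ici_mem_nhds hK'))
  have hAd : ∀ K' : ℝ, 0 < K' → HasDerivAt A (-(K' * p K')) K' := fun K' hK' =>
    key _ hxm hp_mean K' hK'
      (continuousAt_id.mul (hp_cont.continuousAt (Ici_mem_nhds hK')))
  -- C = A - K * F
  have hCeq : ∀ K' : ℝ, 0 < K' →
      (∫ x in Ioi K', (x - K') * p x) = A K' - K' * F K' := by
    intro K' hK'
    have h1 : IntegrableOn (fun x => x * p x) (Ioi K') :=
      hp_mean.mono_set (fun x hx => le_trans hK'.le (le_of_lt hx))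
    have h2 : IntegrableOn p (Ioi K') :=
      hIntp.mono_set (fun x hx => le_trans hK'.le (le_of_lt hx))
    simp_rw [sub_mul]
    rw [MeasureTheory.integral_sub h1 (h2.const_mul K'),
      MeasureTheory.integral_const_mul]
  -- derivative of C
  have hCd : ∀ K' : ℝ, 0 < K' →
      HasDerivAt (fun K => ∫ x in Ioi K, (x - K) * p x) (-(F K')) K' := by
    intro K' hK'
    have h : HasDerivAt (fun K => A K - K * F K)
        (-(K' * p K') - (1 * F K' + K' * -(p K'))) K' :=
      (hAd K' hK').sub ((hasDerivAt_id K').mul (hFd K' hK'))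
    have h' : HasDerivAt (fun K => A K - K * F K) (-(F K')) K' := by
      convert h using 1; ring
    refine h'.congr_of_eventuallyEq ?_
    filter_upwards [Ioi_mem_nhds hK'] with K'' hK''
    exact hCeq K'' hK''
  refine ⟨(hCd K hK).differentiableAt, ?_⟩
  have hnegF : HasDerivAt (fun K' => -(F K')) (p K) K := by
    have h := (hFd K hK).neg; rwa [neg_neg] at h
  refine hnegF.congr_of_eventuallyEq ?_
  filter_upwards [Ioi_mem_nhds hK] with K' hK'
  exact (hCd K' hK').deriv
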